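/- Assume λ(x) ≥ λ̄ > 0 for all x and β ∈ [(3-2λ̄)/(1+2λ̄) + λ̄, (3+2λ̄)/(1-2λ̄) - λ̄/(1-4λ̄²)]. Then for any selector g : X → {-1,+1}: R(g; f*, β) - R(g*; f*, β) ≥ (λ̄ / (4(1+2λ̄))) · E_x[1{g(x) ≠ g*(x)}]. -/

import Mathlib

open MeasureTheory

open Classical in
/-- Real-valued indicator of a proposition. -/
noncomputable def ind (P : Prop) : ℝ := if P then 1 else 0

/-- Population selector risk `R(g; f*, β)` under the Noisy Generative Process,
where the conditional label law is `P[y = f*(x) | x] = 3/4 + g*(x)·λ(x)/2`. -/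
noncomputable def selRisk {X : Type*} [MeasurableSpace X] (μ : Measure X)
    (lam gstar : X → ℝ) (β : ℝ) (g : X → ℝ) : ℝ :=
  ∫ x, (β * (1 / 4 - gstar x * lam x / 2) * ind (g x = 1)
      + (3 / 4 + gstar x * lam x / 2) * ind (g x ≠ 1)) ∂μ

lemma ind_true {P : Prop} (h : P) : ind P = 1 := by unfold ind; simp [h]
lemma ind_false {P : Prop} (h : ¬P) : ind P = 0 := by unfold ind; simp [h]
lemma ind_nonneg (P : Prop) : 0 ≤ ind P := by unfold ind; split <;> norm_num
lemma ind_le_one (P : Prop) : ind P ≤ 1 := by unfold ind; split <;> norm_num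

lemma measurable_ind_eq {X : Type*} [MeasurableSpace X] {g : X → ℝ} (hmg : Measurable g)
    (c : ℝ) : Measurable fun x => ind (g x = c) := by
  unfold ind
  exact Measurable.ite (hmg (measurableSet_singleton c)) measurable_const measurable_const

lemma measurable_ind_ne {X : Type*} [MeasurableSpace X] {g : X → ℝ} (hmg : Measurable g)
    (c : ℝ) : Measurable fun x => ind (g x ≠ c) := by
  unfold ind
  exact Measurable.ite (hmg (measurableSet_singleton c)).compl measurable_const measurable_const

/-- margin inequality: with `λ(x) ≥ λ̄ > 0` and `β` in the interval
`[(3-2λ̄)/(1+2λ̄) + λ̄, (3+2λ̄)/(1-2λ̄) - λ̄/(1-4λ̄²)]` (the upper constraint imposed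
whenever `λ̄ < 1/2`), for every selector `g`:
`R(g; f*, β) - R(g*; f*, β) ≥ (λ̄/(4(1+2λ̄)))·E_x[1{g(x) ≠ g*(x)}]`. -/
theorem stmt1 {X : Type*} [MeasurableSpace X] (μ : Measure X) [IsProbabilityMeasure μ]
    (lb : ℝ) (hlb : 0 < lb)
    (lam : X → ℝ) (hlam : ∀ x, lb ≤ lam x ∧ lam x ≤ 1 / 2) (hmlam : Measurable lam)
    (gstar : X → ℝ) (hgstar : ∀ x, gstar x = 1 ∨ gstar x = -1) (hmgstar : Measurable gstar)
    (β : ℝ)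
    (hβlo : (3 - 2 * lb) / (1 + 2 * lb) + lb ≤ β)
    (hβhi : lb < 1 / 2 → β ≤ (3 + 2 * lb) / (1 - 2 * lb) - lb / (1 - 4 * lb ^ 2))
    (g : X → ℝ) (hg : ∀ x, g x = 1 ∨ g x = -1) (hmg : Measurable g) :
    (lb / (4 * (1 + 2 * lb))) * ∫ x, ind (g x ≠ gstar x) ∂μ
      ≤ selRisk μ lam gstar β g - selRisk μ lam gstar β gstar := by
  have hA : (0:ℝ) < 1 + 2 * lb := by linarith
  -- lower β bound cleared of denominators
  have h1 : (3 - 2 * lb) + lb * (1 + 2 * lb) ≤ β * (1 + 2 * lb) := by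
    rw [div_add' _ _ _ hA.ne'] at hβlo
    exact (div_le_iff₀ hA).mp hβlo
  have hβ0 : 0 < β := by nlinarith [sq_nonneg (lb - 1/4)]
  set c : ℝ := lb / (4 * (1 + 2 * lb)) with hc
  set F : X → ℝ := fun x => β * (1 / 4 - gstar x * lam x / 2) * ind (g x = 1)
      + (3 / 4 + gstar x * lam x / 2) * ind (g x ≠ 1) with hF
  set G : X → ℝ := fun x => β * (1 / 4 - gstar x * lam x / 2) * ind (gstar x = 1)
      + (3 / 4 + gstar x * lam x / 2) * ind (gstar x ≠ 1) with hG
  -- pointwise key inequality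
  have key : ∀ x, c * ind (g x ≠ gstar x) ≤ F x - G x := by
    intro x
    obtain ⟨hl1, hl2⟩ := hlam x
    have h4A : (0:ℝ) < 4 * (1 + 2 * lb) := by linarith
    have hdl : 0 ≤ lam x - lb := by linarith
    rcases hg x with hgx | hgx <;> rcases hgstar x with hsx | hsx <;>
      simp only [hF, hG, hgx, hsx]
    · norm_num [ind_true, ind_false]
    · -- g = 1, gstar = -1
      norm_num [ind]
      rw [hc, div_le_iff₀ h4A]
      nlinarith [mul_le_mul_of_nonneg_right h1 hA.le,
        mul_nonneg (mul_nonneg hβ0.le hdl) hA.le, hdl, mul_nonneg hdl hlb.le,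
        mul_pos hlb (lt_of_lt_of_le hlb hl1), mul_pos (mul_pos hlb hlb) hlb]
    · -- g = -1, gstar = 1
      norm_num [ind]
      rw [hc, div_le_iff₀ h4A]
      by_cases hhalf : lb < 1 / 2
      · have h12 : (0:ℝ) < 1 - 2 * lb := by linarith
        have hprod : (0:ℝ) < (1 - 2 * lb) * (1 + 2 * lb) := mul_pos h12 hA
        have h2 : β * ((1 - 2 * lb) * (1 + 2 * lb)) ≤ (3 + 2 * lb) * (1 + 2 * lb) - lb := by
          have h := hβhi hhalf
          have h4 : 1 - 4 * lb ^ 2 = (1 - 2 * lb) * (1 + 2 * lb) := by ring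
          rw [h4] at h
          calc β * ((1 - 2 * lb) * (1 + 2 * lb))
              ≤ ((3 + 2 * lb) / (1 - 2 * lb) - lb / ((1 - 2 * lb) * (1 + 2 * lb)))
                  * ((1 - 2 * lb) * (1 + 2 * lb)) :=
                mul_le_mul_of_nonneg_right h hprod.le
            _ = (3 + 2 * lb) * (1 + 2 * lb) - lb := by field_simp
        nlinarith [h2, mul_nonneg (mul_nonneg hβ0.le hdl) hA.le,
          mul_nonneg hdl hA.le]
      · have hl : lb = 1 / 2 := le_antisymm (le_trans hl1 hl2) (not_lt.mp hhalf)
        have hlx : lam x = 1 / 2 := le_antisymm hl2 (hl ▸ hl1)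
        rw [hl, hlx]; nlinarith
    · norm_num [ind_true, ind_false]
  -- measurability
  have hmF : Measurable F := by
    apply Measurable.add
    · exact ((measurable_const.sub ((hmgstar.mul hmlam).div_const 2)).const_mul β).mul
        (measurable_ind_eq hmg 1)
    · exact (measurable_const.add ((hmgstar.mul hmlam).div_const 2)).mul
        (measurable_ind_ne hmg 1)
  have hmG : Measurable G := by
    apply Measurable.add
    · exact ((measurable_const.sub ((hmgstar.mul hmlam).div_const 2)).const_mul β).mul
        (measurable_ind_eq hmgstar 1)
    · exact (measurable_const.add ((hmgstar.mul hmlam).div_const 2)).mul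
        (measurable_ind_ne hmgstar 1)
  -- uniform bound on the integrands
  have bound : ∀ (h : X → ℝ), (∀ x, h x = 1 ∨ h x = -1) →
      ∀ x, ‖β * (1 / 4 - gstar x * lam x / 2) * ind (h x = 1)
        + (3 / 4 + gstar x * lam x / 2) * ind (h x ≠ 1)‖ ≤ β / 2 + 1 := by
    intro h hh x
    obtain ⟨hl1, hl2⟩ := hlam x
    have hs : -(1/2) ≤ gstar x * lam x ∧ gstar x * lam x ≤ 1/2 := by
      rcases hgstar x with hsx | hsx <;> rw [hsx] <;> constructor <;> nlinarith
    by_cases hx1 : h x = 1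
    · rw [ind_true hx1, ind_false (fun hn => hn hx1), mul_one, mul_zero, add_zero,
        Real.norm_eq_abs, abs_mul, abs_of_pos hβ0]
      have : |1 / 4 - gstar x * lam x / 2| ≤ 1 / 2 :=
        abs_le.mpr ⟨by linarith [hs.2], by linarith [hs.1]⟩
      nlinarith
    · rw [ind_false hx1, ind_true hx1, mul_zero, zero_add, mul_one, Real.norm_eq_abs]
      have : |3 / 4 + gstar x * lam x / 2| ≤ 1 :=
        abs_le.mpr ⟨by linarith [hs.1], by linarith [hs.2]⟩
      linarith
  have hiF : Integrable F μ := by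
    refine (integrable_const (β / 2 + 1)).mono' hmF.aestronglyMeasurable ?_
    filter_upwards with x using bound g hg x
  have hiG : Integrable G μ := by
    refine (integrable_const (β / 2 + 1)).mono' hmG.aestronglyMeasurable ?_
    filter_upwards with x using bound gstar hgstar x
  have hmI : Measurable fun x => ind (g x ≠ gstar x) := by
    unfold ind
    exact Measurable.ite (measurableSet_eq_fun hmg hmgstar).compl measurable_const
      measurable_const
  have hiI : Integrable (fun x => c * ind (g x ≠ gstar x)) μ := by
    refine (integrable_const (|c|)).mono' (hmI.const_mul c).aestronglyMeasurable ?_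
    filter_upwards with x
    rw [Real.norm_eq_abs, abs_mul]
    calc |c| * |ind (g x ≠ gstar x)| ≤ |c| * 1 := by
          refine mul_le_mul_of_nonneg_left ?_ (abs_nonneg c)
          rw [abs_of_nonneg (ind_nonneg _)]; exact ind_le_one _
      _ = |c| := mul_one _
  have hsel : selRisk μ lam gstar β g - selRisk μ lam gstar β gstar = ∫ x, (F x - G x) ∂μ := by
    rw [integral_sub hiF hiG]; rfl
  calc c * ∫ x, ind (g x ≠ gstar x) ∂μ = ∫ x, c * ind (g x ≠ gstar x) ∂μ :=
        (integral_const_mul c _).symm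
    _ ≤ ∫ x, (F x - G x) ∂μ := integral_mono hiI (hiF.sub hiG) key
    _ = selRisk μ lam gstar β g - selRisk μ lam gstar β gstar := hsel.symm
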